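/- arXiv:1506.07941 — 4 statements merged into one kernel-verified Lean document; each statement's English description precedes it below -/
import Mathlib

section
/- Let p be an odd prime, N a positive integer, and A ⊆ {0, 1, ..., N-1} a modular p-free set mod N. Then S_p(A) = A + N·S_p(0), where A + N·S_p(0) = {a + N·s : a ∈ A, s ∈ S_p(0)}. -/
open scoped Classical

/-- A set of naturals is `p`-free if it contains no `p`-term arithmetic
progression with positive common difference. -/
def IsPFree (p : ℕ) (A : Set ℕ) : Prop :=
  ¬ ∃ a d : ℕ, 0 < d ∧ ∀ i < p, a + i * d ∈ A

/-- `A` `p`-covers `x`: there are `x₁ < x₂ < ⋯ < x_{p-1}` in `A` such that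
`x₁, …, x_{p-1}, x` is an arithmetic progression. -/
def PCovers (p : ℕ) (A : Set ℕ) (x : ℕ) : Prop :=
  ∃ a d : ℕ, 0 < d ∧ (∀ i < p - 1, a + i * d ∈ A) ∧ a + (p - 1) * d = x

/-- The set of naturals `≤ n` accepted by the greedy algorithm generating the
`p`-Stanley sequence of `A`: an integer is accepted if it belongs to `A`, or if
it exceeds every element of `A` and adjoining it to the previously accepted
integers keeps the set `p`-free. -/
noncomputable def stanleyUpTo (p : ℕ) (A : Set ℕ) : ℕ → Set ℕ
  | 0 => if 0 ∈ A ∨ ((∀ a ∈ A, a < 0) ∧ IsPFree p {0}) then {0} else ∅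
  | n + 1 =>
      if n + 1 ∈ A ∨ ((∀ a ∈ A, a < n + 1) ∧
          IsPFree p (insert (n + 1) (stanleyUpTo p A n))) then
        insert (n + 1) (stanleyUpTo p A n)
      else stanleyUpTo p A n

/-- The `p`-Stanley sequence generated by `A`, as a set of naturals. -/
def StanleySeq (p : ℕ) (A : Set ℕ) : Set ℕ := {x | x ∈ stanleyUpTo p A x}

/-- `A ⊆ {0, 1, …, N-1}` `p`-covers `x` mod `N`: there are
`x₁ < x₂ < ⋯ < x_{p-1}` in `A` such that `x₁, …, x_{p-1}, x` or
`x₁, …, x_{p-1}, x + N` is an arithmetic progression. -/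
def PCoversMod (p N : ℕ) (A : Set ℕ) (x : ℕ) : Prop :=
  ∃ a d : ℕ, 0 < d ∧ (∀ i < p - 1, a + i * d ∈ A) ∧
    (a + (p - 1) * d = x ∨ a + (p - 1) * d = x + N)

/-- `A` is `p`-free mod `N`: `A` contains no `p`-term arithmetic progression
modulo `N` with nonzero common difference. -/
def IsPFreeMod (p N : ℕ) (A : Set ℕ) : Prop :=
  ¬ ∃ a d : ZMod N, d ≠ 0 ∧ ∀ i : ℕ, i < p → ∃ x ∈ A, (x : ZMod N) = a + (i : ZMod N) * d

/-- `A ⊆ {0, 1, …, N-1}` is a modular `p`-free set mod `N`: it contains `0`,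
is `p`-free mod `N`, and `p`-covers mod `N` every `x` with `0 ≤ x < N`, `x ∉ A`. -/
def IsModularPFree (p N : ℕ) (A : Set ℕ) : Prop :=
  A ⊆ Set.Iio N ∧ 0 ∈ A ∧ IsPFreeMod p N A ∧
    ∀ x < N, x ∉ A → PCoversMod p N A x

section Aux

variable {p : ℕ} {A : Set ℕ}

lemma isPFree_subset {B : Set ℕ} (h : A ⊆ B) (hB : IsPFree p B) : IsPFree p A := by
  rintro ⟨a, d, hd, hm⟩
  exact hB ⟨a, d, hd, fun i hi => h (hm i hi)⟩

lemma isPFree_singleton (hp : 2 ≤ p) : IsPFree p ({0} : Set ℕ) := by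
  rintro ⟨a, d, hd, hm⟩
  have h0 := hm 0 (by omega)
  have h1 := hm 1 (by omega)
  simp only [Set.mem_singleton_iff] at h0 h1
  omega

lemma stanleyUpTo_mono {m n : ℕ} (h : m ≤ n) : stanleyUpTo p A m ⊆ stanleyUpTo p A n := by
  induction n with
  | zero =>
    have : m = 0 := by omega
    subst this; exact subset_rfl
  | succ n ih =>
    rcases Nat.lt_or_ge m (n + 1) with h' | h'
    · refine (ih (by omega)).trans ?_
      rw [stanleyUpTo]
      split
      · exact Set.subset_insert _ _
      · exact subset_rfl
    · have : m = n + 1 := by omega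
      subst this; exact subset_rfl

lemma mem_stanleyUpTo {x n : ℕ} (h : x ∈ stanleyUpTo p A n) : x ≤ n ∧ x ∈ StanleySeq p A := by
  induction n with
  | zero =>
    rw [stanleyUpTo] at h
    split_ifs at h with hc
    · simp only [Set.mem_singleton_iff] at h
      subst h
      refine ⟨le_refl 0, ?_⟩
      show (0 : ℕ) ∈ stanleyUpTo p A 0
      rw [stanleyUpTo, if_pos hc]
      exact Set.mem_singleton 0
    · exact absurd h (Set.notMem_empty x)
  | succ n ih =>
    rw [stanleyUpTo] at h
    split_ifs at h with hc
    · rcases Set.mem_insert_iff.mp h with rfl | h'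
      · refine ⟨le_refl _, ?_⟩
        show n + 1 ∈ stanleyUpTo p A (n + 1)
        rw [stanleyUpTo, if_pos hc]
        exact Set.mem_insert _ _
      · obtain ⟨h1, h2⟩ := ih h'
        exact ⟨by omega, h2⟩
    · obtain ⟨h1, h2⟩ := ih h
      exact ⟨by omega, h2⟩

lemma mem_stanleyUpTo_of {x n : ℕ} (h : x ∈ StanleySeq p A) (hxn : x ≤ n) :
    x ∈ stanleyUpTo p A n := stanleyUpTo_mono hxn h

lemma mem_stanley_of_mem_A {a : ℕ} (h : a ∈ A) : a ∈ StanleySeq p A := by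
  show a ∈ stanleyUpTo p A a
  cases a with
  | zero => rw [stanleyUpTo, if_pos (Or.inl h)]; exact Set.mem_singleton 0
  | succ n => rw [stanleyUpTo, if_pos (Or.inl h)]; exact Set.mem_insert _ _

lemma stanleyUpTo_subset_A {n b : ℕ} (hb : b ∈ A) (hn : n < b) : stanleyUpTo p A n ⊆ A := by
  induction n with
  | zero =>
    rw [stanleyUpTo]
    split_ifs with hc
    · rcases hc with h0 | ⟨hlt, _⟩
      · intro x hx
        simp only [Set.mem_singleton_iff] at hx
        subst hx; exact h0
      · exact absurd (hlt b hb) (by omega)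
    · exact Set.empty_subset A
  | succ n ih =>
    rw [stanleyUpTo]
    split_ifs with hc
    · rcases hc with h1 | ⟨hlt, _⟩
      · exact Set.insert_subset_iff.mpr ⟨h1, ih (by omega)⟩
      · exact absurd (hlt b hb) (by omega)
    · exact ih (by omega)

lemma stanleyUpTo_isPFree (hp : 2 ≤ p) (hfA : IsPFree p A) (n : ℕ) :
    IsPFree p (stanleyUpTo p A n) := by
  induction n with
  | zero =>
    rw [stanleyUpTo]
    split_ifs with hc
    · exact isPFree_singleton hp
    · rintro ⟨a, d, hd, hm⟩
      exact absurd (hm 0 (by omega)) (Set.notMem_empty _)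
  | succ n ih =>
    rw [stanleyUpTo]
    split_ifs with hc
    · rcases hc with h1 | ⟨_, hpf⟩
      · exact isPFree_subset
          (Set.insert_subset_iff.mpr ⟨h1, stanleyUpTo_subset_A h1 (by omega)⟩) hfA
      · exact hpf
    · exact ih

lemma stanleySeq_isPFree (hp : 2 ≤ p) (hfA : IsPFree p A) : IsPFree p (StanleySeq p A) := by
  rintro ⟨a, d, hd, hm⟩
  refine stanleyUpTo_isPFree hp hfA (a + (p - 1) * d) ⟨a, d, hd, fun i hi => ?_⟩
  have h1 : a + i * d ∈ StanleySeq p A := hm i hi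
  have h2 : i * d ≤ (p - 1) * d := Nat.mul_le_mul_right d (by omega)
  exact mem_stanleyUpTo_of h1 (by omega)

lemma stanley_reject (hp : 2 ≤ p) (hfA : IsPFree p A) (h0 : 0 ∈ A) {x : ℕ}
    (hx : x ∉ StanleySeq p A) (hxA : x ∉ A) (hgt : ∀ a ∈ A, a < x) :
    ∃ a d, 0 < d ∧ (∀ i < p - 1, a + i * d ∈ StanleySeq p A) ∧ a + (p - 1) * d = x := by
  have hx1 : 1 ≤ x := hgt 0 h0
  obtain ⟨y, rfl⟩ : ∃ y, x = y + 1 := ⟨x - 1, by omega⟩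
  have hx' : y + 1 ∉ stanleyUpTo p A (y + 1) := hx
  rw [stanleyUpTo] at hx'
  split_ifs at hx' with hc
  · exact absurd (Set.mem_insert _ _) hx'
  have hnpf : ¬ IsPFree p (insert (y + 1) (stanleyUpTo p A y)) := by
    intro hpf; exact hc (Or.inr ⟨hgt, hpf⟩)
  rw [IsPFree, not_not] at hnpf
  obtain ⟨a, d, hd, hm⟩ := hnpf
  have hple : ∀ i, i < p → i * d ≤ (p - 1) * d :=
    fun i hi => Nat.mul_le_mul_right d (by omega)
  have hMmem := hm (p - 1) (by omega)
  have hM : a + (p - 1) * d = y + 1 := by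
    by_contra hne
    have hMy : a + (p - 1) * d ≤ y := by
      rcases Set.mem_insert_iff.mp hMmem with h | h
      · exact absurd h hne
      · exact (mem_stanleyUpTo h).1
    refine stanleyUpTo_isPFree hp hfA y ⟨a, d, hd, fun i hi => ?_⟩
    rcases Set.mem_insert_iff.mp (hm i hi) with h | h
    · exfalso; have := hple i hi; omega
    · exact h
  refine ⟨a, d, hd, fun i hi => ?_, hM⟩
  have hid : i * d < (p - 1) * d := (Nat.mul_lt_mul_right hd).mpr hi
  rcases Set.mem_insert_iff.mp (hm i (by omega)) with h | h
  · omega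
  · exact (mem_stanleyUpTo h).2

end Aux

/-- If `A` is a modular `p`-free set mod `N`, then
`S_p(A) = A + N · S_p(0)`. -/
theorem stanley_of_modular (p N : ℕ) (hp : p.Prime) (hodd : Odd p)
    (hN : 0 < N) (A : Set ℕ) (hA : IsModularPFree p N A) :
    StanleySeq p A =
      {x : ℕ | ∃ a ∈ A, ∃ s ∈ StanleySeq p {0}, x = a + N * s} := by
  classical
  obtain ⟨hAN, h0A, hfreeMod, hcov⟩ := hA
  have hp2 : 2 ≤ p := hp.two_le
  have hp3 : 3 ≤ p := by
    rcases hodd with ⟨k, hk⟩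
    have := hp.two_le
    omega
  have h0S : (0 : ℕ) ∈ StanleySeq p {0} := mem_stanley_of_mem_A rfl
  have hSfree : IsPFree p (StanleySeq p ({0} : Set ℕ)) :=
    stanleySeq_isPFree hp2 (isPFree_singleton hp2)
  have hAfree : IsPFree p A := by
    rintro ⟨a, d, hd, hm⟩
    by_cases hdN : (d : ZMod N) = 0
    · have hdvd : N ∣ d := (ZMod.natCast_eq_zero_iff d N).mp hdN
      have h1 : a + 1 * d ∈ A := hm 1 (by omega)
      have h2 : a + 1 * d < N := hAN h1
      have h3 : N ≤ d := Nat.le_of_dvd hd hdvd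
      omega
    · exact hfreeMod ⟨(a : ZMod N), (d : ZMod N), hdN, fun i hi =>
        ⟨a + i * d, hm i hi, by push_cast; ring⟩⟩
  set T : Set ℕ := {x : ℕ | ∃ a ∈ A, ∃ s ∈ StanleySeq p {0}, x = a + N * s} with hTdef
  have memT : ∀ x : ℕ, x ∈ T ↔ x % N ∈ A ∧ x / N ∈ StanleySeq p {0} := by
    intro x
    constructor
    · rintro ⟨a, ha, s, hs, rfl⟩
      have haN : a < N := hAN ha
      have h1 : (a + N * s) % N = a := by
        rw [Nat.add_mul_mod_self_left, Nat.mod_eq_of_lt haN]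
      have h2 : (a + N * s) / N = s := by
        rw [Nat.add_mul_div_left _ _ hN, Nat.div_eq_of_lt haN, Nat.zero_add]
      rw [h1, h2]; exact ⟨ha, hs⟩
    · rintro ⟨h1, h2⟩
      exact ⟨x % N, h1, x / N, h2, (Nat.mod_add_div x N).symm⟩
  have hTfree : IsPFree p T := by
    rintro ⟨a, d, hd, hm⟩
    by_cases hdN : (d : ZMod N) = 0
    · obtain ⟨e, rfl⟩ : N ∣ d := (ZMod.natCast_eq_zero_iff d N).mp hdN
      have he : 0 < e := by
        rcases Nat.eq_zero_or_pos e with rfl | h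
        · simp at hd
        · exact h
      refine hSfree ⟨a / N, e, he, fun i hi => ?_⟩
      have hmem := ((memT _).mp (hm i hi)).2
      have hq : (a + i * (N * e)) / N = a / N + i * e := by
        rw [show a + i * (N * e) = a + i * e * N by ring, Nat.add_mul_div_right _ _ hN]
      rwa [hq] at hmem
    · refine hfreeMod ⟨(a : ZMod N), (d : ZMod N), hdN, fun i hi => ?_⟩
      refine ⟨(a + i * d) % N, ((memT _).mp (hm i hi)).1, ?_⟩
      rw [ZMod.natCast_mod]
      push_cast; ring
  have lemC : ∀ q : ℕ, ∃ f : ℕ, ∀ i, 0 < i → i ≤ p - 1 →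
      ∃ s ∈ StanleySeq p ({0} : Set ℕ), s + i * f = q := by
    intro q
    by_cases hq : q ∈ StanleySeq p ({0} : Set ℕ)
    · exact ⟨0, fun i _ _ => ⟨q, hq, by ring⟩⟩
    · have hq0 : q ≠ 0 := fun h => hq (h ▸ h0S)
      obtain ⟨a, e, he, hmem, hend⟩ :=
        stanley_reject hp2 (isPFree_singleton hp2) rfl hq
          (by simpa using hq0)
          (fun b hb => by
            simp only [Set.mem_singleton_iff] at hb
            subst hb
            exact Nat.pos_of_ne_zero hq0)
      refine ⟨e, fun i hi1 hi2 => ⟨a + (p - 1 - i) * e, hmem _ (by omega), ?_⟩⟩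
      have hsum : (p - 1 - i) + i = p - 1 := by omega
      calc a + (p - 1 - i) * e + i * e = a + ((p - 1 - i) + i) * e := by ring
        _ = q := by rw [hsum]; exact hend
  have cover : ∀ x : ℕ, x ∉ T → (∀ a ∈ A, a < x) →
      ∃ a d, 0 < d ∧ (∀ i < p - 1, a + i * d ∈ T) ∧ a + (p - 1) * d = x := by
    intro x hxT hgt
    have hx_eq : N * (x / N) + x % N = x := Nat.div_add_mod x N
    have hrN : x % N < N := Nat.mod_lt x hN
    by_cases hrA : x % N ∈ A
    · have hqS : x / N ∉ StanleySeq p ({0} : Set ℕ) :=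
        fun h => hxT ((memT x).mpr ⟨hrA, h⟩)
      have hq0 : x / N ≠ 0 := by
        intro h
        rw [h] at hx_eq
        have := hgt _ hrA
        omega
      obtain ⟨b, e, he, hmem, hend⟩ :=
        stanley_reject hp2 (isPFree_singleton hp2) rfl hqS
          (by simpa using hq0)
          (fun c hc => by
            simp only [Set.mem_singleton_iff] at hc
            subst hc
            exact Nat.pos_of_ne_zero hq0)
      refine ⟨N * b + x % N, N * e, by positivity, fun i hi => ?_, ?_⟩
      · exact ⟨x % N, hrA, b + i * e, hmem i hi, by ring⟩
      · calc N * b + x % N + (p - 1) * (N * e) = N * (b + (p - 1) * e) + x % N := by ring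
          _ = N * (x / N) + x % N := by rw [hend]
          _ = x := hx_eq
    · obtain ⟨b, d, hd, hmem, hend⟩ := hcov (x % N) hrN hrA
      rcases hend with hend | hend
      · obtain ⟨f, hf⟩ := lemC (x / N)
        obtain ⟨s1, hs1, hs1eq⟩ := hf (p - 1) (by omega) le_rfl
        refine ⟨N * s1 + b, d + N * f, by omega, fun i hi => ?_, ?_⟩
        · obtain ⟨s2, hs2, hs2eq⟩ := hf (p - 1 - i) (by omega) (by omega)
          have hkey : s1 + i * f = s2 := by
            have h1 : (s1 + i * f) + (p - 1 - i) * f = x / N := by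
              have hsum : i + (p - 1 - i) = p - 1 := by omega
              calc (s1 + i * f) + (p - 1 - i) * f = s1 + (i + (p - 1 - i)) * f := by ring
                _ = x / N := by rw [hsum]; exact hs1eq
            exact Nat.add_right_cancel (h1.trans hs2eq.symm)
          refine ⟨b + i * d, hmem i hi, s2, hs2, ?_⟩
          calc N * s1 + b + i * (d + N * f) = b + i * d + N * (s1 + i * f) := by ring
            _ = b + i * d + N * s2 := by rw [hkey]
        · calc N * s1 + b + (p - 1) * (d + N * f)
              = N * (s1 + (p - 1) * f) + (b + (p - 1) * d) := by ring
            _ = N * (x / N) + x % N := by rw [hs1eq, hend]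
            _ = x := hx_eq
      · have hdN2 : d < N := by
          have h2 : 2 * d ≤ (p - 1) * d := Nat.mul_le_mul_right d (by omega)
          linarith
        have hq1 : 1 ≤ x / N := by
          by_contra h
          have hq0 : x / N = 0 := Nat.eq_zero_of_not_pos h
          rw [hq0] at hx_eq
          have hxr : x = x % N := by omega
          have hm2 : b + (p - 2) * d ∈ A := hmem (p - 2) (by omega)
          have hlt2 := hgt _ hm2
          have heq2 : b + (p - 2) * d + d = x % N + N := by
            have hsum : (p - 2) + 1 = p - 1 := by omega
            calc b + (p - 2) * d + d = b + ((p - 2) + 1) * d := by ring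
              _ = x % N + N := by rw [hsum]; exact hend
          linarith
        obtain ⟨q0, hq0eq⟩ : ∃ q0, x / N = q0 + 1 := ⟨x / N - 1, by omega⟩
        obtain ⟨f, hf⟩ := lemC q0
        obtain ⟨s1, hs1, hs1eq⟩ := hf (p - 1) (by omega) le_rfl
        refine ⟨N * s1 + b, d + N * f, by omega, fun i hi => ?_, ?_⟩
        · obtain ⟨s2, hs2, hs2eq⟩ := hf (p - 1 - i) (by omega) (by omega)
          have hkey : s1 + i * f = s2 := by
            have h1 : (s1 + i * f) + (p - 1 - i) * f = q0 := by
              have hsum : i + (p - 1 - i) = p - 1 := by omega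
              calc (s1 + i * f) + (p - 1 - i) * f = s1 + (i + (p - 1 - i)) * f := by ring
                _ = q0 := by rw [hsum]; exact hs1eq
            exact Nat.add_right_cancel (h1.trans hs2eq.symm)
          refine ⟨b + i * d, hmem i hi, s2, hs2, ?_⟩
          calc N * s1 + b + i * (d + N * f) = b + i * d + N * (s1 + i * f) := by ring
            _ = b + i * d + N * s2 := by rw [hkey]
        · calc N * s1 + b + (p - 1) * (d + N * f)
              = N * (s1 + (p - 1) * f) + (b + (p - 1) * d) := by ring
            _ = N * q0 + (x % N + N) := by rw [hs1eq, hend]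
            _ = N * (q0 + 1) + x % N := by ring
            _ = N * (x / N) + x % N := by rw [hq0eq]
            _ = x := hx_eq
  ext x
  induction x using Nat.strong_induction_on with
  | _ x IH =>
  constructor
  · intro hxS
    by_contra hxT
    have hxA : x ∉ A := fun h => hxT ⟨x, h, 0, h0S, by ring⟩
    rcases Nat.eq_zero_or_pos x with rfl | hx1
    · exact hxT ⟨0, h0A, 0, h0S, by ring⟩
    obtain ⟨y, rfl⟩ : ∃ y, x = y + 1 := ⟨x - 1, by omega⟩
    have hxS' : y + 1 ∈ stanleyUpTo p A (y + 1) := hxS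
    rw [stanleyUpTo] at hxS'
    split_ifs at hxS' with hc
    · rcases hc with h | ⟨hgt, hpf⟩
      · exact hxA h
      · obtain ⟨a, d, hd, hmem, hend⟩ := cover (y + 1) hxT hgt
        refine hpf ⟨a, d, hd, fun i hi => ?_⟩
        rcases Nat.lt_or_ge i (p - 1) with hi' | hi'
        · have hid : i * d < (p - 1) * d := (Nat.mul_lt_mul_right hd).mpr hi'
          have hlt : a + i * d < y + 1 := by linarith
          have hmT : a + i * d ∈ T := hmem i hi'
          have hmS : a + i * d ∈ StanleySeq p A := (IH _ hlt).mpr hmT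
          exact Set.mem_insert_of_mem _ (mem_stanleyUpTo_of hmS (by omega))
        · have hieq : i = p - 1 := by omega
          rw [hieq, hend]
          exact Set.mem_insert _ _
    · have := (mem_stanleyUpTo hxS').1
      omega
  · intro hxT
    obtain ⟨a, ha, s, hs, rfl⟩ := hxT
    rcases Nat.eq_zero_or_pos s with rfl | hs1
    · simpa using mem_stanley_of_mem_A ha
    have hNs : N ≤ N * s := Nat.le_mul_of_pos_right N hs1
    have hgt : ∀ b ∈ A, b < a + N * s := fun b hb => by
      have := hAN hb
      simp only [Set.mem_Iio] at this
      omega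
    obtain ⟨y, hy⟩ : ∃ y, a + N * s = y + 1 := ⟨a + N * s - 1, by omega⟩
    show a + N * s ∈ stanleyUpTo p A (a + N * s)
    rw [hy, stanleyUpTo]
    have hsub : insert (y + 1) (stanleyUpTo p A y) ⊆ T := by
      intro z hz
      rcases Set.mem_insert_iff.mp hz with rfl | hz'
      · exact ⟨a, ha, s, hs, hy.symm⟩
      · obtain ⟨hz1, hz2⟩ := mem_stanleyUpTo hz'
        exact (IH z (by omega)).mp hz2
    have hpf : IsPFree p (insert (y + 1) (stanleyUpTo p A y)) := isPFree_subset hsub hTfree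
    rw [if_pos (Or.inr ⟨fun b hb => by have := hgt b hb; omega, hpf⟩)]
    exact Set.mem_insert _ _
end

section
/- Let p be an odd prime. Then S_p(0), the p-Stanley sequence generated by {0}, consists exactly of the nonnegative integers having no digit equal to p-1 in their base-p expansion. -/
open scoped Classical

section StanleyAux

/-- `n` has a base-`p` digit equal to `p - 1`, phrased arithmetically. -/
def Dig (p n : ℕ) : Prop := ∃ k, n / p ^ k % p = p - 1

lemma dig_iff (p : ℕ) (n : ℕ) : Dig p n ↔ (n % p = p - 1 ∨ Dig p (n / p)) := by
  constructor
  · rintro ⟨k, hk⟩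
    cases k with
    | zero => left; simpa using hk
    | succ k =>
        right
        exact ⟨k, by rwa [Nat.div_div_eq_div_mul, ← pow_succ']⟩
  · rintro (h | ⟨k, hk⟩)
    · exact ⟨0, by simpa using h⟩
    · exact ⟨k + 1, by rwa [pow_succ', ← Nat.div_div_eq_div_mul]⟩

lemma notDig_zero (p : ℕ) (hp2 : 2 ≤ p) : ¬ Dig p 0 := by
  rintro ⟨k, hk⟩
  simp [Nat.zero_div] at hk
  omega

/-- Number of base-`p` digits of `x` equal to `p-1`, read as a base-`p` number. -/
def eF (p x : ℕ) : ℕ :=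
  (Nat.digits p x).foldr (fun dk acc => (if dk = p - 1 then 1 else 0) + p * acc) 0

/-- `x` with every base-`p` digit equal to `p-1` replaced by `i`. -/
def aF (p i x : ℕ) : ℕ :=
  (Nat.digits p x).foldr (fun dk acc => (if dk = p - 1 then i else dk) + p * acc) 0

lemma eF_zero (p : ℕ) : eF p 0 = 0 := by simp [eF]

lemma aF_zero (p i : ℕ) : aF p i 0 = 0 := by simp [aF]

lemma eF_rec (p x : ℕ) (hp2 : 2 ≤ p) (hx : 0 < x) :
    eF p x = (if x % p = p - 1 then 1 else 0) + p * eF p (x / p) := by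
  rw [eF, Nat.digits_def' (by omega : 1 < p) hx, List.foldr_cons]; rfl

lemma aF_rec (p i x : ℕ) (hp2 : 2 ≤ p) (hx : 0 < x) :
    aF p i x = (if x % p = p - 1 then i else x % p) + p * aF p i (x / p) := by
  rw [aF, Nat.digits_def' (by omega : 1 < p) hx, List.foldr_cons]; rfl

lemma aF_last (p : ℕ) (hp2 : 2 ≤ p) : ∀ x, aF p (p - 1) x = x := by
  intro x
  induction x using Nat.strong_induction_on with
  | _ x IH =>
    rcases Nat.eq_zero_or_pos x with rfl | hx
    · exact aF_zero p _
    · rw [aF_rec p _ x hp2 hx, IH (x / p) (Nat.div_lt_self hx (by omega))]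
      have : (if x % p = p - 1 then p - 1 else x % p) = x % p := by
        split <;> omega
      rw [this, Nat.mod_add_div]

lemma aF_ap (p i : ℕ) (hp2 : 2 ≤ p) : ∀ x, aF p i x = aF p 0 x + i * eF p x := by
  intro x
  induction x using Nat.strong_induction_on with
  | _ x IH =>
    rcases Nat.eq_zero_or_pos x with rfl | hx
    · simp [aF_zero, eF_zero]
    · rw [aF_rec p i x hp2 hx, aF_rec p 0 x hp2 hx, eF_rec p x hp2 hx,
        IH (x / p) (Nat.div_lt_self hx (by omega))]
      split
      · ring
      · ring

lemma notDig_aF (p i : ℕ) (hp2 : 2 ≤ p) (hi : i < p - 1) :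
    ∀ x, ¬ Dig p (aF p i x) := by
  intro x
  induction x using Nat.strong_induction_on with
  | _ x IH =>
    rcases Nat.eq_zero_or_pos x with rfl | hx
    · rw [aF_zero]; exact notDig_zero p hp2
    · rw [aF_rec p i x hp2 hx, dig_iff]
      push_neg
      have hmodlt : x % p < p := Nat.mod_lt _ (by omega)
      set A := if x % p = p - 1 then i else x % p with hA
      have hAlt : A < p := by rw [hA]; split <;> omega
      have hAne : A ≠ p - 1 := by rw [hA]; split <;> omega
      constructor
      · rw [Nat.add_mul_mod_self_left, Nat.mod_eq_of_lt hAlt]; exact hAne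
      · rw [Nat.add_mul_div_left _ _ (by omega : 0 < p), Nat.div_eq_of_lt hAlt, zero_add]
        exact IH (x / p) (Nat.div_lt_self hx (by omega))

lemma eF_pos_of_dig (p : ℕ) (hp2 : 2 ≤ p) : ∀ x, Dig p x → 0 < eF p x := by
  intro x
  induction x using Nat.strong_induction_on with
  | _ x IH =>
    intro hd
    rcases Nat.eq_zero_or_pos x with rfl | hx
    · exact absurd hd (notDig_zero p hp2)
    · rw [eF_rec p x hp2 hx]
      rw [dig_iff] at hd
      rcases hd with h | h
      · rw [if_pos h]; omega
      · have := IH (x / p) (Nat.div_lt_self hx (by omega)) h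
        have : 0 < p * eF p (x / p) := Nat.mul_pos (by omega) this
        omega

lemma mem_digits_iff (p : ℕ) (hp2 : 2 ≤ p) : ∀ n, ((p - 1) ∈ Nat.digits p n ↔ Dig p n) := by
  intro n
  induction n using Nat.strong_induction_on with
  | _ n IH =>
    rcases Nat.eq_zero_or_pos n with rfl | hn
    · simp [notDig_zero p hp2]
    · rw [Nat.digits_def' (by omega : 1 < p) hn, List.mem_cons,
        IH (n / p) (Nat.div_lt_self hn (by omega)), dig_iff p n]
      rw [eq_comm]

lemma pfree_noDig (p : ℕ) (hp : p.Prime) : IsPFree p {n | ¬ Dig p n} := by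
  haveI : Fact p.Prime := ⟨hp⟩
  rintro ⟨a, d, hd, hmem⟩
  set k := d.factorization p with hk
  set e := d / p ^ k with he
  have hde : p ^ k * e = d := Nat.ordProj_mul_ordCompl_eq_self d p
  have hpe : ¬ p ∣ e := Nat.not_dvd_ordCompl hp hd.ne'
  set c := a / p ^ k with hc
  have hez : (e : ZMod p) ≠ 0 := by
    rw [Ne, ZMod.natCast_eq_zero_iff]; exact hpe
  set z : ZMod p := (((p - 1 : ℕ) : ZMod p) - (c : ZMod p)) * (e : ZMod p)⁻¹ with hz
  have hilt : z.val < p := ZMod.val_lt z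
  refine hmem z.val hilt ⟨k, ?_⟩
  have h1 : a + z.val * d = a + p ^ k * (z.val * e) := by rw [← hde]; ring
  rw [h1, Nat.add_mul_div_left _ _ (pow_pos hp.pos k), ← hc]
  have h2 : ((c + z.val * e : ℕ) : ZMod p) = ((p - 1 : ℕ) : ZMod p) := by
    push_cast
    rw [ZMod.natCast_rightInverse z, hz, mul_assoc, inv_mul_cancel₀ hez, mul_one]
    ring
  have h3 := congrArg ZMod.val h2
  rw [ZMod.val_natCast, ZMod.val_natCast, Nat.mod_eq_of_lt (by omega : p - 1 < p)] at h3
  exact h3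

lemma isPFree_mono (p : ℕ) {S T : Set ℕ} (hST : S ⊆ T) (hT : IsPFree p T) :
    IsPFree p S := by
  rintro ⟨a, d, hd, hmem⟩
  exact hT ⟨a, d, hd, fun i hi => hST (hmem i hi)⟩

end StanleyAux

/-- For `p` an odd prime, `S_p(0)` consists exactly of the
nonnegative integers with no base-`p` digit equal to `p - 1`. -/
theorem stanley_zero_eq_no_digit (p : ℕ) (hp : p.Prime) (hodd : Odd p) :
    StanleySeq p {0} = {n : ℕ | (p - 1) ∉ Nat.digits p n} := by
  have hp2 : 2 ≤ p := hp.two_le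
  have hpfree : IsPFree p {n | ¬ Dig p n} := pfree_noDig p hp
  have key : ∀ n, stanleyUpTo p {0} n = {m | m ≤ n ∧ ¬ Dig p m} := by
    intro n
    induction n with
    | zero =>
      have h0 : (0 : ℕ) ∈ ({0} : Set ℕ) ∨ ((∀ a ∈ ({0} : Set ℕ), a < 0) ∧ IsPFree p {0}) :=
        Or.inl rfl
      rw [stanleyUpTo, if_pos h0]
      ext m
      simp only [Set.mem_singleton_iff, Set.mem_setOf_eq]
      constructor
      · rintro rfl; exact ⟨le_refl 0, notDig_zero p hp2⟩
      · rintro ⟨h, -⟩; omega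
    | succ n IH =>
      rw [stanleyUpTo, IH]
      by_cases hD : Dig p (n + 1)
      · rw [if_neg]
        · ext m
          simp only [Set.mem_setOf_eq]
          constructor
          · rintro ⟨h1, h2⟩; exact ⟨by omega, h2⟩
          · rintro ⟨h1, h2⟩
            refine ⟨?_, h2⟩
            rcases Nat.lt_succ_iff_lt_or_eq.mp (Nat.lt_succ_of_le h1) with h | rfl
            · omega
            · exact absurd hD h2
        · rintro (h | ⟨-, hfree⟩)
          · exact absurd h (by simp)
          · refine hfree ⟨aF p 0 (n + 1), eF p (n + 1),
              eF_pos_of_dig p hp2 (n + 1) hD, fun i hi => ?_⟩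
            rw [Set.mem_insert_iff]
            by_cases hip : i < p - 1
            · right
              rw [← aF_ap p i hp2 (n + 1)]
              refine ⟨?_, notDig_aF p i hp2 hip (n + 1)⟩
              have hlt : aF p i (n + 1) < aF p (p - 1) (n + 1) := by
                rw [aF_ap p i hp2 (n + 1), aF_ap p (p - 1) hp2 (n + 1)]
                have := eF_pos_of_dig p hp2 (n + 1) hD
                have := Nat.mul_lt_mul_of_lt_of_le hip (le_refl (eF p (n + 1))) this
                omega
              rw [aF_last p hp2 (n + 1)] at hlt
              omega
            · left
              have hieq : i = p - 1 := by omega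
              rw [hieq, ← aF_ap p (p - 1) hp2 (n + 1), aF_last p hp2 (n + 1)]
      · rw [if_pos]
        · ext m
          simp only [Set.mem_insert_iff, Set.mem_setOf_eq]
          constructor
          · rintro (rfl | ⟨h1, h2⟩)
            · exact ⟨le_refl _, hD⟩
            · exact ⟨by omega, h2⟩
          · rintro ⟨h1, h2⟩
            rcases Nat.lt_succ_iff_lt_or_eq.mp (Nat.lt_succ_of_le h1) with h | rfl
            · exact Or.inr ⟨by omega, h2⟩
            · exact Or.inl rfl
        · refine Or.inr ⟨?_, ?_⟩
          · intro a ha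
            simp only [Set.mem_singleton_iff] at ha
            omega
          · refine isPFree_mono p ?_ hpfree
            intro m hm
            rcases Set.mem_insert_iff.mp hm with rfl | ⟨-, h2⟩
            · exact hD
            · exact h2
  ext x
  simp only [StanleySeq, Set.mem_setOf_eq, key x, le_refl, true_and,
    mem_digits_iff p hp2 x]
end

section
/- Let p be an odd prime and k a positive integer, and let S_p^k = {x ∈ S_p(0) : x < p^k} (equivalently, the set of nonnegative integers less than p^k with no base-p digit equal to p-1). Then S_p^k is a modular p-free set mod p^k: it contains 0, it is p-free mod p^k, and it p-covers mod p^k every x with 0 ≤ x < p^k and x ∉ S_p^k. -/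
open scoped Classical

/-!
Let `M` be the set of naturals with no base-`p` digit `p - 1`. Reading off the last digit,
`p * q + r ∈ M` iff `r ≠ p - 1` and `q ∈ M`. If `x ∉ M`, replacing each digit `p - 1` of `x`
by `j = 0, 1, …, p - 1` gives a `p`-term progression ending at `x` whose other terms lie in `M`.
Conversely, along a progression `a + j * d`, even one taken modulo `p ^ k` with `p ^ k ∤ d`,
the digit in position `v_p(d)` runs through every residue mod `p` because `p` is prime, so some
term has the digit `p - 1`. Hence the greedy algorithm accepts exactly the elements of `M`, that
is `S_p(0) = M`, and `M ∩ [0, p ^ k)` is modular `p`-free mod `p ^ k`.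
-/

def maxDigitFree (p : ℕ) : Set ℕ := {x | p - 1 ∉ p.digits x}

section

variable {p : ℕ}

lemma zero_mem_maxDigitFree : 0 ∈ maxDigitFree p := by
  simp [maxDigitFree]

lemma mem_maxDigitFree_iff (hp : 1 < p) {x : ℕ} :
    x ∈ maxDigitFree p ↔ x % p ≠ p - 1 ∧ x / p ∈ maxDigitFree p := by
  rcases Nat.eq_zero_or_pos x with rfl | hx
  · simp only [Nat.zero_mod, Nat.zero_div, zero_mem_maxDigitFree, and_true, true_iff]
    omega
  · simp [maxDigitFree, Nat.digits_def' hp hx, eq_comm]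

lemma mul_add_mem_maxDigitFree_iff (hp : 1 < p) {q r : ℕ} (hr : r < p) :
    p * q + r ∈ maxDigitFree p ↔ r ≠ p - 1 ∧ q ∈ maxDigitFree p := by
  rw [mem_maxDigitFree_iff hp, Nat.mul_add_mod, Nat.mod_eq_of_lt hr, Nat.mul_add_div (by omega),
    Nat.div_eq_of_lt hr, add_zero]

lemma IsPFree.mono {A B : Set ℕ} (h : IsPFree p B) (hAB : A ⊆ B) : IsPFree p A :=
  fun ⟨a, d, hd, hA⟩ => h ⟨a, d, hd, fun i hi => hAB (hA i hi)⟩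

lemma IsPFreeMod.mono {N : ℕ} {A B : Set ℕ} (h : IsPFreeMod p N B) (hAB : A ⊆ B) :
    IsPFreeMod p N A := fun ⟨a, d, hd, hA⟩ =>
  h ⟨a, d, hd, fun i hi => (hA i hi).imp fun _ hx => ⟨hAB hx.1, hx.2⟩⟩

lemma PCovers.mono {A B : Set ℕ} {x : ℕ} (h : PCovers p A x) (hAB : A ⊆ B) : PCovers p B x :=
  let ⟨a, d, hd, hA, hx⟩ := h
  ⟨a, d, hd, fun i hi => hAB (hA i hi), hx⟩

lemma PCovers.inter_Iio {A : Set ℕ} {x : ℕ} (h : PCovers p A x) :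
    PCovers p (A ∩ Set.Iio x) x := by
  obtain ⟨a, d, hd, hA, rfl⟩ := h
  refine ⟨a, d, hd, fun i hi => ⟨hA i hi, ?_⟩, rfl⟩
  have := Nat.mul_lt_mul_of_pos_right hi hd
  simp only [Set.mem_Iio]
  omega

lemma PCovers.not_isPFree_insert (hp : 0 < p) {A : Set ℕ} {x : ℕ} (h : PCovers p A x) :
    ¬ IsPFree p (insert x A) := by
  obtain ⟨a, d, hd, hA, rfl⟩ := h
  refine fun hfree => hfree ⟨a, d, hd, fun i hi => ?_⟩
  rcases Nat.lt_or_ge i (p - 1) with h | h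
  · exact Or.inr (hA i h)
  · obtain rfl : i = p - 1 := by omega
    exact Or.inl rfl

theorem pCovers_of_not_mem_maxDigitFree (hp : 1 < p) {x : ℕ} (hx : x ∉ maxDigitFree p) :
    PCovers p (maxDigitFree p) x := by
  induction x using Nat.strong_induction_on with
  | _ x ih =>
  have hx0 : 0 < x := Nat.pos_of_ne_zero (by rintro rfl; exact hx zero_mem_maxDigitFree)
  have hr : x % p < p := Nat.mod_lt _ (by omega)
  have hq : x / p < x := Nat.div_lt_self hx0 hp
  rw [← Nat.div_add_mod x p] at hx ⊢
  rw [mul_add_mem_maxDigitFree_iff hp hr] at hx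
  set q := x / p
  set r := x % p
  by_cases hqM : q ∈ maxDigitFree p
  · have hr' : r = p - 1 := by tauto
    refine ⟨p * q, 1, one_pos, fun j hj => ?_, by omega⟩
    exact (mul_add_mem_maxDigitFree_iff hp (by omega)).2 ⟨by omega, hqM⟩
  obtain ⟨a, d, hd, hA, hlast⟩ := ih q hq hqM
  rw [← hlast]
  by_cases hr' : r = p - 1
  · refine ⟨p * a, p * d + 1, by omega, fun j hj => ?_, by rw [hr']; ring⟩
    rw [show p * a + j * (p * d + 1) = p * (a + j * d) + j by ring,
      mul_add_mem_maxDigitFree_iff hp (by omega)]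
    exact ⟨by omega, hA j hj⟩
  · refine ⟨p * a + r, p * d, by positivity, fun j hj => ?_, by ring⟩
    rw [show p * a + r + j * (p * d) = p * (a + j * d) + r by ring,
      mul_add_mem_maxDigitFree_iff hp hr]
    exact ⟨hr', hA j hj⟩

lemma exists_add_mul_mod_eq_pred (hp : p.Prime) {d : ℕ} (hd : ¬ p ∣ d) (a : ℕ) :
    ∃ j < p, (a + j * d) % p = p - 1 := by
  have := Fact.mk hp
  have hd' : (d : ZMod p) ≠ 0 := by rwa [Ne, ZMod.natCast_eq_zero_iff]
  set J : ZMod p := (-1 - a) * (d : ZMod p)⁻¹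
  refine ⟨J.val, J.val_lt, ?_⟩
  have hJ : ((a + J.val * d : ℕ) : ZMod p) = ((p - 1 : ℕ) : ZMod p) := by
    simp [J, hd', hp.one_le]
  rwa [ZMod.natCast_eq_natCast_iff', Nat.mod_eq_of_lt (Nat.sub_lt hp.pos one_pos)] at hJ

theorem exists_not_mem_maxDigitFree_of_modEq (hp : p.Prime) {k a d : ℕ} (hd : ¬ p ^ k ∣ d)
    {x : ℕ → ℕ} (hx : ∀ j < p, x j ≡ a + j * d [MOD p ^ k]) :
    ∃ j < p, x j ∉ maxDigitFree p := by
  induction k generalizing a d x with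
  | zero => exact absurd (one_dvd d) (by simp at hd)
  | succ k ih =>
    have hx_mod : ∀ j < p, x j % p = (a + j * d) % p := fun j hj =>
      (hx j hj).of_dvd (dvd_pow_self p k.succ_ne_zero)
    by_cases hpd : p ∣ d
    · obtain ⟨e, rfl⟩ := hpd
      have he : ¬ p ^ k ∣ e := fun h => hd (by rw [pow_succ']; exact mul_dvd_mul_left p h)
      have hx_div : ∀ j < p, x j / p ≡ a / p + j * e [MOD p ^ k] := by
        intro j hj
        refine Nat.ModEq.mul_left_cancel' hp.ne_zero (Nat.ModEq.add_right_cancel' (a % p) ?_)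
        have hxj : p * (x j / p) + a % p = x j := by
          conv_rhs => rw [← Nat.div_add_mod (x j) p]
          rw [hx_mod j hj, mul_left_comm, Nat.add_mul_mod_self_left]
        have ha : p * (a / p + j * e) + a % p = a + j * (p * e) := by
          rw [mul_add, add_right_comm, Nat.div_add_mod]; ring
        rw [hxj, ha, ← pow_succ']
        exact hx j hj
      obtain ⟨j, hj, hj'⟩ := ih he hx_div
      exact ⟨j, hj, fun hmem => hj' ((mem_maxDigitFree_iff hp.one_lt).1 hmem).2⟩
    · obtain ⟨j, hj, hdigit⟩ := exists_add_mul_mod_eq_pred hp hpd a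
      refine ⟨j, hj, fun hmem => ((mem_maxDigitFree_iff hp.one_lt).1 hmem).1 ?_⟩
      rw [hx_mod j hj, hdigit]

theorem isPFree_maxDigitFree (hp : p.Prime) : IsPFree p (maxDigitFree p) := by
  rintro ⟨a, d, hd, hA⟩
  have hdk : ¬ p ^ d ∣ d := fun h => (Nat.le_of_dvd hd h).not_gt (Nat.lt_pow_self hp.one_lt)
  obtain ⟨j, hj, hj'⟩ :=
    exists_not_mem_maxDigitFree_of_modEq hp hdk (x := fun j => a + j * d) fun _ _ => rfl
  exact hj' (hA j hj)

theorem isPFreeMod_maxDigitFree (hp : p.Prime) (k : ℕ) :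
    IsPFreeMod p (p ^ k) (maxDigitFree p) := by
  have : NeZero (p ^ k) := ⟨pow_ne_zero k hp.ne_zero⟩
  rintro ⟨a, d, hd, h⟩
  choose! x hxA hx using h
  have hdk : ¬ p ^ k ∣ d.val := by rwa [← ZMod.natCast_eq_zero_iff, ZMod.natCast_zmod_val]
  have hmod : ∀ j < p, x j ≡ a.val + j * d.val [MOD p ^ k] := by
    intro j hj
    rw [← ZMod.natCast_eq_natCast_iff]
    simp [hx j hj]
  obtain ⟨j, hj, hj'⟩ := exists_not_mem_maxDigitFree_of_modEq hp hdk hmod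
  exact hj' (hxA j hj)

lemma isPFree_insert_maxDigitFree_inter_Iic_iff (hp : p.Prime) (n : ℕ) :
    IsPFree p (insert (n + 1) (maxDigitFree p ∩ Set.Iic n)) ↔ n + 1 ∈ maxDigitFree p := by
  refine ⟨fun hfree => by_contra fun hn => ?_, fun hn =>
    (isPFree_maxDigitFree hp).mono (Set.insert_subset hn Set.inter_subset_left)⟩
  refine ((pCovers_of_not_mem_maxDigitFree hp.one_lt hn).inter_Iio.mono ?_).not_isPFree_insert
    hp.pos hfree
  exact fun y hy => ⟨hy.1, Nat.lt_succ_iff.1 hy.2⟩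

theorem stanleyUpTo_zero (hp : p.Prime) (n : ℕ) :
    stanleyUpTo p {0} n = maxDigitFree p ∩ Set.Iic n := by
  induction n with
  | zero =>
    rw [stanleyUpTo, if_pos (Or.inl (Set.mem_singleton 0))]
    ext x
    exact ⟨fun hx => ⟨hx ▸ zero_mem_maxDigitFree, hx.le⟩, fun hx => Nat.le_zero.1 hx.2⟩
  | succ n ih =>
    have hcond : (n + 1 ∈ ({0} : Set ℕ) ∨ ((∀ a ∈ ({0} : Set ℕ), a < n + 1) ∧
        IsPFree p (insert (n + 1) (maxDigitFree p ∩ Set.Iic n)))) ↔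
        n + 1 ∈ maxDigitFree p := by
      simp [isPFree_insert_maxDigitFree_inter_Iic_iff hp]
    have hIic : Set.Iic (n + 1) = insert (n + 1) (Set.Iic n) := Order.Iic_succ n
    rw [stanleyUpTo, ih, hIic]
    by_cases hn : n + 1 ∈ maxDigitFree p
    · rw [if_pos (hcond.2 hn), Set.inter_insert_of_mem hn]
    · rw [if_neg (mt hcond.1 hn), Set.inter_insert_of_notMem hn]

theorem stanleySeq_zero (hp : p.Prime) : StanleySeq p {0} = maxDigitFree p := by
  ext x
  simp [StanleySeq, stanleyUpTo_zero hp]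

end

theorem Spk_isModularPFree_general (p k : ℕ) (hp : p.Prime) :
    IsModularPFree p (p ^ k) {x | x ∈ StanleySeq p {0} ∧ x < p ^ k} := by
  rw [stanleySeq_zero hp]
  refine ⟨fun x hx => hx.2, ⟨zero_mem_maxDigitFree, pow_pos hp.pos k⟩,
    (isPFreeMod_maxDigitFree hp k).mono fun x hx => hx.1, fun x hxN hx => ?_⟩
  obtain ⟨a, d, hd, hA, hlast⟩ :=
    (pCovers_of_not_mem_maxDigitFree hp.one_lt fun hxM => hx ⟨hxM, hxN⟩).inter_Iio
  exact ⟨a, d, hd, fun i hi => ⟨(hA i hi).1, (hA i hi).2.trans hxN⟩, Or.inl hlast⟩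

/-- For `p` an odd prime and `k ≥ 1`, the set
`S_p^k = {x ∈ S_p(0) : x < p^k}` is a modular `p`-free set mod `p^k`. -/
theorem Spk_isModularPFree (p k : ℕ) (hp : p.Prime) (hodd : Odd p)
    (hk : 0 < k) :
    IsModularPFree p (p ^ k) {x | x ∈ StanleySeq p {0} ∧ x < p ^ k} :=
  Spk_isModularPFree_general p k hp
end

section
/- Let p > 3 be a prime and let n, k be such that p^{k-2} < n ≤ p^{k-1}, p^{k-1} - n ∈ S_p(0), and p^{k-1} - n < (p-2)p^{k-2}. Define A = ({0} ∪ (n + S_p^k)) \ {(p-1)p^{k-1}}. Then A is p-free mod p^k: there is no p-term arithmetic progression modulo p^k with nonzero common difference contained in A. -/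
open scoped Classical

/-!
`S_p(0)` consists of the numbers with no base-`p` digit `p - 1`: such numbers form a `p`-free
set, and a number with some digit `p - 1` is the last term of a progression whose earlier terms
replace those digits by `0, 1, …, p - 2`.

Shift a progression `b + i d` in `A` by `-n`. If `p ^ j` exactly divides `d`, the `j`-th digits of
its `p` terms are pairwise distinct, so one term has digit `p - 1` there. The only shifted element
of `A` with such a digit is `-n = (p - 1) p^(k-1) + (p^(k-1) - n)`, whose lower digits avoid
`p - 1`; hence `j = k - 1`. All terms then agree with `-n` below position `k - 1`, and the term with
top digit `p - 2` is `(p - 1) p^(k-1) - n`, the shift of the excluded element.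
-/

def NoTopDigit (p x : ℕ) : Prop := ∀ j, x / p ^ j % p ≠ p - 1

section Digits

variable {p : ℕ}

lemma noTopDigit_zero (hp : 2 ≤ p) : NoTopDigit p 0 := by
  intro j
  simp only [Nat.zero_div, Nat.zero_mod]
  omega

lemma noTopDigit_add_mul_iff (hp : 0 < p) {c m : ℕ} (hc : c < p) :
    NoTopDigit p (c + p * m) ↔ c ≠ p - 1 ∧ NoTopDigit p m := by
  have hlow : (c + p * m) % p = c := by rw [Nat.add_mul_mod_self_left, Nat.mod_eq_of_lt hc]
  have hhigh : ∀ j, (c + p * m) / p ^ (j + 1) = m / p ^ j := fun j => by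
    rw [pow_succ', ← Nat.div_div_eq_div_mul, Nat.add_mul_div_left _ _ hp, Nat.div_eq_of_lt hc,
      zero_add]
  constructor
  · intro h
    exact ⟨by simpa [hlow] using h 0, fun j => by simpa [hhigh] using h (j + 1)⟩
  · rintro ⟨hc', hm⟩ (_ | j)
    · simpa [hlow] using hc'
    · simpa [hhigh] using hm j

lemma exists_add_mul_noTopDigit (hp : 2 ≤ p) (x : ℕ) :
    ∃ a d : ℕ, (∀ i < p - 1, NoTopDigit p (a + i * d)) ∧ a + (p - 1) * d = x := by
  induction x using Nat.strong_induction_on with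
  | _ x ih =>
  rcases Nat.eq_zero_or_pos x with rfl | hx
  · exact ⟨0, 0, fun i _ => by simpa using noTopDigit_zero hp, by simp⟩
  obtain ⟨a, d, hterms, hlast⟩ := ih (x / p) (Nat.div_lt_self hx (by omega))
  set c := x % p
  have hx : c + p * (a + (p - 1) * d) = x := by rw [hlast, Nat.mod_add_div]
  have hcp : c < p := Nat.mod_lt _ (by omega)
  by_cases hc : c = p - 1
  -- the last digit `p - 1` of `x` becomes `i` in the `i`-th term
  · refine ⟨p * a, 1 + p * d, fun i hi => ?_, by rw [← hx, hc]; ring⟩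
    rw [show p * a + i * (1 + p * d) = i + p * (a + i * d) by ring,
      noTopDigit_add_mul_iff (by omega) (by omega)]
    exact ⟨by omega, hterms i hi⟩
  · refine ⟨c + p * a, p * d, fun i hi => ?_, by rw [← hx]; ring⟩
    rw [show c + p * a + i * (p * d) = c + p * (a + i * d) by ring,
      noTopDigit_add_mul_iff (by omega) hcp]
    exact ⟨hc, hterms i hi⟩

lemma pCovers_of_not_noTopDigit (hp : 2 ≤ p) {x : ℕ} (hx : ¬ NoTopDigit p x) :
    PCovers p {y | NoTopDigit p y ∧ y < x} x := by
  obtain ⟨a, d, hterms, hlast⟩ := exists_add_mul_noTopDigit hp x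
  have hd : 0 < d := by
    rcases Nat.eq_zero_or_pos d with rfl | hd
    · exact absurd (by simpa [← hlast] using hterms 0 (by omega)) hx
    · exact hd
  refine ⟨a, d, hd, fun i hi => ⟨hterms i hi, ?_⟩, hlast⟩
  have := Nat.mul_lt_mul_of_pos_right hi hd
  omega

lemma not_isPFree_insert_of_pCovers {A : Set ℕ} {x : ℕ} (hx : PCovers p A x) :
    ¬ IsPFree p (insert x A) := by
  obtain ⟨a, d, hd, hterms, hlast⟩ := hx
  refine not_not.mpr ⟨a, d, hd, fun i hi => ?_⟩
  rcases Nat.lt_or_ge i (p - 1) with hi' | hi'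
  · exact Or.inr (hterms i hi')
  · exact Or.inl (by rw [show i = p - 1 by omega, hlast])

lemma exists_digit_add_mul_eq (hp : p.Prime) (a : ℕ) {d : ℕ} (hd : d ≠ 0) {t : ℕ} (ht : t < p) :
    ∃ i < p, (a + i * d) / p ^ d.factorization p % p = t := by
  have : Fact p.Prime := ⟨hp⟩
  set j := d.factorization p
  set e := d / p ^ j
  have he : (e : ZMod p) ≠ 0 := by
    rw [Ne, ZMod.natCast_eq_zero_iff]
    exact Nat.not_dvd_ordCompl hp hd
  set i : ZMod p := ((t : ZMod p) - ((a / p ^ j : ℕ) : ZMod p)) * (e : ZMod p)⁻¹ with hi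
  refine ⟨i.val, i.val_lt, ?_⟩
  -- dividing by `p ^ j` turns the progression into `a / p ^ j + i * e` with `e` invertible mod `p`
  have hdiv : (a + i.val * d) / p ^ j = a / p ^ j + i.val * e := by
    rw [← Nat.ordProj_mul_ordCompl_eq_self d p, show i.val * (p ^ j * e) = i.val * e * p ^ j by ring,
      Nat.add_mul_div_right _ _ (pow_pos hp.pos j)]
  rw [hdiv, ← ZMod.val_natCast, ← ZMod.val_cast_of_lt ht]
  congr 1
  push_cast
  rw [ZMod.natCast_val, ZMod.cast_id', id, hi, mul_assoc, inv_mul_cancel₀ he]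
  ring

lemma isPFree_of_forall_noTopDigit (hp : p.Prime) {A : Set ℕ} (hA : ∀ x ∈ A, NoTopDigit p x) :
    IsPFree p A := by
  rintro ⟨a, d, hd, hterms⟩
  obtain ⟨i, hi, hdigit⟩ := exists_digit_add_mul_eq hp a hd.ne' (t := p - 1) (by
    have := hp.pos; omega)
  exact hA _ (hterms i hi) _ hdigit

lemma stanleyUpTo_singleton_zero (hp : p.Prime) (m : ℕ) :
    stanleyUpTo p {0} m = {y | NoTopDigit p y ∧ y ≤ m} := by
  induction m with
  | zero =>
    rw [stanleyUpTo, if_pos (Or.inl (Set.mem_singleton 0))]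
    ext y
    simp only [Set.mem_singleton_iff, Set.mem_ofPred_eq, Nat.le_zero]
    exact ⟨fun h => ⟨h ▸ noTopDigit_zero hp.two_le, h⟩, And.right⟩
  | succ m ih =>
    have hlt : {y | NoTopDigit p y ∧ y ≤ m} = {y | NoTopDigit p y ∧ y < m + 1} := by
      simp only [Nat.lt_succ_iff]
    have haccept : (m + 1 ∈ ({0} : Set ℕ) ∨ ((∀ a ∈ ({0} : Set ℕ), a < m + 1) ∧
        IsPFree p (insert (m + 1) {y | NoTopDigit p y ∧ y ≤ m}))) ↔ NoTopDigit p (m + 1) := by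
      simp only [Set.mem_singleton_iff, forall_eq, Nat.succ_ne_zero, false_or, hlt]
      refine ⟨fun h => ?_, fun h => ⟨by omega, ?_⟩⟩
      · by_contra hx
        exact not_isPFree_insert_of_pCovers (pCovers_of_not_noTopDigit hp.two_le hx) h.2
      · exact isPFree_of_forall_noTopDigit hp (by rintro x (rfl | ⟨hx, -⟩) <;> assumption)
    rw [stanleyUpTo, ih]
    ext y
    by_cases hm : NoTopDigit p (m + 1)
    · rw [if_pos (haccept.mpr hm)]
      simp only [Set.mem_insert_iff, Set.mem_ofPred_eq, Nat.le_succ_iff]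
      grind
    · rw [if_neg (mt haccept.mp hm)]
      simp only [Set.mem_ofPred_eq, Nat.le_succ_iff]
      grind

lemma stanleySeq_singleton_zero (hp : p.Prime) : StanleySeq p {0} = {x | NoTopDigit p x} := by
  ext x
  simp [StanleySeq, stanleyUpTo_singleton_zero hp]

lemma digit_mod_pow_of_lt {x j k : ℕ} (h : j < k) : x % p ^ k / p ^ j % p = x / p ^ j % p := by
  rw [show p ^ k = p ^ j * p ^ (k - j) by rw [← pow_add]; congr 1; omega,
    Nat.mod_mul_right_div_self, Nat.mod_mod_of_dvd _ (dvd_pow_self p (by omega))]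

end Digits

namespace ZMod

lemma val_add_natCast_mul {N : ℕ} [NeZero N] (b d : ZMod N) (i : ℕ) :
    (b + i * d).val = (b.val + i * d.val) % N := by
  rw [← val_natCast]
  congr 1
  simp

lemma val_add_natCast_mul_mod_of_dvd {N m : ℕ} [NeZero N] (b d : ZMod N) (i : ℕ)
    (hmN : m ∣ N) (hmd : m ∣ d.val) : (b + i * d).val % m = b.val % m := by
  obtain ⟨e, he⟩ := hmd
  rw [val_add_natCast_mul, Nat.mod_mod_of_dvd _ hmN, he, show i * (m * e) = i * e * m by ring,
    Nat.add_mul_mod_self_right]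

lemma exists_digit_val_add_natCast_mul_eq {p k : ℕ} (hp : p.Prime) (b : ZMod (p ^ k))
    {d : ZMod (p ^ k)} (hd : d ≠ 0) :
    ∃ j < k, p ^ j ∣ d.val ∧ ∀ t < p, ∃ i < p, (b + i * d).val / p ^ j % p = t := by
  have : NeZero (p ^ k) := ⟨pow_ne_zero k hp.ne_zero⟩
  have hd' : d.val ≠ 0 := (val_ne_zero d).mpr hd
  have hjk : d.val.factorization p < k :=
    (Nat.pow_lt_pow_iff_right hp.one_lt).mp ((Nat.ordProj_le p hd').trans_lt d.val_lt)
  refine ⟨_, hjk, Nat.ordProj_dvd _ _, fun t ht => ?_⟩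
  obtain ⟨i, hi, hdigit⟩ := exists_digit_add_mul_eq hp b.val hd' ht
  exact ⟨i, hi, by rw [val_add_natCast_mul, digit_mod_pow_of_lt hjk, hdigit]⟩

end ZMod

section TopDigit

variable {p k : ℕ}

lemma pow_eq_pred_mul_add (hp : 0 < p) (hk : 0 < k) :
    p ^ k = (p - 1) * p ^ (k - 1) + p ^ (k - 1) := by
  obtain ⟨k, rfl⟩ := Nat.exists_eq_add_of_lt hk
  obtain ⟨p, rfl⟩ := Nat.exists_eq_add_of_lt hp
  simp only [Nat.add_sub_cancel, zero_add]
  ring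

lemma pow_sub_mod_pow_pred (hp : 0 < p) (hk : 0 < k) {n : ℕ} (hn : 0 < n)
    (hnK : n ≤ p ^ (k - 1)) : (p ^ k - n) % p ^ (k - 1) = p ^ (k - 1) - n := by
  rw [show p ^ k - n = (p ^ (k - 1) - n) + (p - 1) * p ^ (k - 1) by
    rw [pow_eq_pred_mul_add hp hk]; omega, Nat.add_mul_mod_self_right]
  exact Nat.mod_eq_of_lt (by omega)

lemma eq_digit_pred_mul_add_mod (hp : 0 < p) (hk : 0 < k) {y : ℕ} (hy : y < p ^ k) :
    y = y / p ^ (k - 1) % p * p ^ (k - 1) + y % p ^ (k - 1) := by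
  have hdiv : y / p ^ (k - 1) < p := by
    rwa [Nat.div_lt_iff_lt_mul (pow_pos hp _), ← pow_succ', Nat.sub_add_cancel hk]
  rw [Nat.mod_eq_of_lt hdiv, Nat.div_add_mod']

lemma eq_pred_of_digit_pow_sub_eq_pred (hp : 0 < p) {n j : ℕ} (hn : 0 < n)
    (hnK : n ≤ p ^ (k - 1)) (hr : NoTopDigit p (p ^ (k - 1) - n)) (hjk : j < k)
    (hdigit : (p ^ k - n) / p ^ j % p = p - 1) : j = k - 1 := by
  by_contra hj
  apply hr j
  rw [← pow_sub_mod_pow_pred hp (by omega) hn hnK, digit_mod_pow_of_lt (by omega), hdigit]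

lemma val_add_natCast_mul_add_eq_of_topDigit (hp : 2 ≤ p) (hk : 0 < k) {n : ℕ} (hn : 0 < n)
    (hnK : n ≤ p ^ (k - 1)) [NeZero (p ^ k)] {b d : ZMod (p ^ k)} (hdK : p ^ (k - 1) ∣ d.val)
    {i₁ i₂ : ℕ} (h₁ : (b + i₁ * d).val = p ^ k - n)
    (h₂ : (b + i₂ * d).val / p ^ (k - 1) % p = p - 2) :
    (b + i₂ * d).val + n = (p - 1) * p ^ (k - 1) := by
  have hKN : p ^ (k - 1) ∣ p ^ k := pow_dvd_pow p (by omega)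
  have hlow : (b + i₂ * d).val % p ^ (k - 1) = p ^ (k - 1) - n := by
    rw [ZMod.val_add_natCast_mul_mod_of_dvd b d i₂ hKN hdK,
      ← ZMod.val_add_natCast_mul_mod_of_dvd b d i₁ hKN hdK, h₁,
      pow_sub_mod_pow_pred (by omega) hk hn hnK]
  have hval := eq_digit_pred_mul_add_mod (by omega) hk (ZMod.val_lt (b + (i₂ : ZMod (p ^ k)) * d))
  rw [h₂, hlow] at hval
  have hpred : (p - 1) * p ^ (k - 1) = (p - 2) * p ^ (k - 1) + p ^ (k - 1) := by
    rw [← Nat.succ_mul, Nat.succ_eq_add_one, show p - 2 + 1 = p - 1 by omega]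
  omega

end TopDigit

lemma val_eq_or_noTopDigit_of_mem {p n k x : ℕ} (hp : p.Prime) (hn : 0 < n) (hnN : n ≤ p ^ k)
    (hx : x ∈ ({0} ∪ (fun s => n + s) '' {x | x ∈ StanleySeq p {0} ∧ x < p ^ k}) \
      {(p - 1) * p ^ (k - 1)})
    {y : ZMod (p ^ k)} (hy : (x : ZMod (p ^ k)) = y + n) :
    y.val = p ^ k - n ∨ (NoTopDigit p y.val ∧ y.val + n ≠ (p - 1) * p ^ (k - 1)) := by
  obtain ⟨rfl | ⟨s, ⟨hs, hsN⟩, rfl⟩, hx⟩ := hx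
  · left
    have : y = ((p ^ k - n : ℕ) : ZMod (p ^ k)) := by
      rw [Nat.cast_sub hnN, ZMod.natCast_self, zero_sub]
      exact eq_neg_of_add_eq_zero_left (by simpa using hy.symm)
    rw [this, ZMod.val_cast_of_lt (by omega)]
  · right
    have : y = s := by
      push_cast at hy
      exact (add_left_cancel (hy.trans (add_comm _ _))).symm
    rw [stanleySeq_singleton_zero hp] at hs
    rw [this, ZMod.val_cast_of_lt hsN]
    exact ⟨hs, by simpa [add_comm] using hx⟩

theorem modular_set_pfree_general (p n k : ℕ) (hp : p.Prime)
    (hn1 : p ^ (k - 2) < n) (hn2 : n ≤ p ^ (k - 1))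
    (hn3 : p ^ (k - 1) - n ∈ StanleySeq p {0}) :
    IsPFreeMod p (p ^ k)
      (({0} ∪ (fun s => n + s) '' {x | x ∈ StanleySeq p {0} ∧ x < p ^ k}) \
        {(p - 1) * p ^ (k - 1)}) := by
  rintro ⟨a, d, hd, hAP⟩
  have : NeZero (p ^ k) := ⟨pow_ne_zero k hp.ne_zero⟩
  have hn : 0 < n := (Nat.zero_le _).trans_lt hn1
  have hp2 := hp.two_le
  rw [stanleySeq_singleton_zero hp] at hn3
  set b : ZMod (p ^ k) := a - n
  obtain ⟨j, hjk, hdj, hdigit⟩ := ZMod.exists_digit_val_add_natCast_mul_eq hp b hd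
  have hterm : ∀ i < p, (b + i * d).val = p ^ k - n ∨
      (NoTopDigit p (b + i * d).val ∧ (b + i * d).val + n ≠ (p - 1) * p ^ (k - 1)) := by
    intro i hi
    obtain ⟨x, hx, hxi⟩ := hAP i hi
    have hnN : n ≤ p ^ k := hn2.trans (Nat.pow_le_pow_right hp.pos (by omega))
    exact val_eq_or_noTopDigit_of_mem hp hn hnN hx (by rw [hxi]; ring)
  obtain ⟨i₁, hi₁, hdigit₁⟩ := hdigit (p - 1) (by omega)
  have h₁ : (b + i₁ * d).val = p ^ k - n := (hterm i₁ hi₁).resolve_right fun h => h.1 j hdigit₁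
  obtain rfl : j = k - 1 := eq_pred_of_digit_pow_sub_eq_pred hp.pos hn hn2 hn3 hjk (h₁ ▸ hdigit₁)
  obtain ⟨i₂, hi₂, hdigit₂⟩ := hdigit (p - 2) (by omega)
  have h₂ := val_add_natCast_mul_add_eq_of_topDigit hp2 (by omega) hn hn2 hdj h₁ hdigit₂
  rcases hterm i₂ hi₂ with h | ⟨-, hne⟩
  · have := pow_eq_pred_mul_add hp.pos (by omega : 0 < k)
    have := pow_pos hp.pos (k - 1)
    omega
  · exact hne h₂

/-- For `p > 3` prime, `p^{k-2} < n ≤ p^{k-1}` with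
`p^{k-1} - n ∈ S_p(0)` and `p^{k-1} - n < (p-2)p^{k-2}`, the set
`A = ({0} ∪ (n + S_p^k)) \ {(p-1)p^{k-1}}` is `p`-free mod `p^k`. -/
theorem modular_set_pfree (p n k : ℕ) (hp : p.Prime) (hp3 : 3 < p)
    (hk : 2 ≤ k) (hn1 : p ^ (k - 2) < n) (hn2 : n ≤ p ^ (k - 1))
    (hn3 : p ^ (k - 1) - n ∈ StanleySeq p {0})
    (hn4 : p ^ (k - 1) - n < (p - 2) * p ^ (k - 2)) :
    IsPFreeMod p (p ^ k)
      (({0} ∪ (fun s => n + s) '' {x | x ∈ StanleySeq p {0} ∧ x < p ^ k}) \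
        {(p - 1) * p ^ (k - 1)}) :=
  modular_set_pfree_general p n k hp hn1 hn2 hn3
end
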